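/- Quality of the spectral estimator: Under the generative model, let Φ ∈ ℝ^{nd×d} satisfy ΦᵀΦ = n I_d and maximize tr(ΦᵀCΦ) over all matrices with this constraint (equivalently, the columns of Φ are scaled top-d eigenvectors of C), and let G⁰ ∈ O(d)^{⊗n} be a blockwise nearest point of Φ in O(d)^{⊗n} (each G⁰_i minimizes ‖X − Φ_i‖_F over X ∈ O(d)). Then d(G⁰, G*) ≤ 8√d (‖W − μ·1_n1_nᵀ‖ + ‖A ∘ Δ‖)/(√n · μ). -/

import Mathlib

open Matrix BigOperators

noncomputable section
namespace GroupSync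

variable {n d : ℕ}

section PSDSqrt
open scoped ComplexOrder

/-- The positive semidefinite square root of a positive semidefinite matrix
(the former `Matrix.PosSemidef.sqrt`, removed from Mathlib). -/
def PosSemidef.sqrt {𝕜 : Type*} [RCLike 𝕜] {m : Type*} [Fintype m] [DecidableEq m]
    {M : Matrix m m 𝕜} (hA : M.PosSemidef) : Matrix m m 𝕜 :=
  hA.1.eigenvectorUnitary.1 * diagonal ((↑) ∘ (Real.sqrt ∘ hA.1.eigenvalues)) *
    (star hA.1.eigenvectorUnitary : Matrix m m 𝕜)

end PSDSqrt

/-- Frobenius norm of a real matrix. -/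
def frob {m k : Type*} [Fintype m] [Fintype k] (X : Matrix m k ℝ) : ℝ :=
  Real.sqrt (∑ i, ∑ j, (X i j) ^ 2)

/-- Spectral (operator) norm of a real matrix: the operator norm of the induced
linear map between Euclidean spaces. -/
def spec {m k : Type*} [Fintype m] [Fintype k] [DecidableEq k] (X : Matrix m k ℝ) : ℝ :=
  ‖LinearMap.toContinuousLinearMap (Matrix.toEuclideanLin X)‖

/-- Nuclear norm: trace of the positive semidefinite square root of `X * Xᵀ`
(i.e. the sum of the singular values of `X`). -/
def nuclear {m k : Type*} [Fintype m] [Fintype k] [DecidableEq m] (X : Matrix m k ℝ) : ℝ :=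
  (PosSemidef.sqrt (Matrix.posSemidef_self_mul_conjTranspose X)).trace

/-- The positive semidefinite square root of `X * Xᵀ`. -/
def psdSqrtMulT {m k : Type*} [Fintype m] [Fintype k] [DecidableEq m] (X : Matrix m k ℝ) :
    Matrix m m ℝ :=
  PosSemidef.sqrt (Matrix.posSemidef_self_mul_conjTranspose X)

/-- Membership in the orthogonal group `O(d)`. -/
def IsOd (g : Matrix (Fin d) (Fin d) ℝ) : Prop :=
  gᵀ * g = 1 ∧ g * gᵀ = 1

/-- Membership in the special orthogonal group `SO(d)`. -/
def IsSOd (g : Matrix (Fin d) (Fin d) ℝ) : Prop :=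
  IsOd g ∧ g.det = 1

/-- The `i`-th `d × d` block of an `nd × d` matrix. -/
def blk (X : Matrix (Fin n × Fin d) (Fin d) ℝ) (i : Fin n) : Matrix (Fin d) (Fin d) ℝ :=
  Matrix.of fun a b => X (i, a) b

/-- Membership in `O(d)^{⊗n}`: every `d × d` block is orthogonal. -/
def OdN (G : Matrix (Fin n × Fin d) (Fin d) ℝ) : Prop :=
  ∀ i : Fin n, IsOd (blk G i)

/-- Membership in `SO(d)^{⊗n}`. -/
def SOdN (G : Matrix (Fin n × Fin d) (Fin d) ℝ) : Prop :=
  ∀ i : Fin n, IsSOd (blk G i)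

/-- The `i`-th block column (an `nd × d` matrix) of an `nd × nd` matrix. -/
def bcol (M : Matrix (Fin n × Fin d) (Fin n × Fin d) ℝ) (i : Fin n) :
    Matrix (Fin n × Fin d) (Fin d) ℝ :=
  Matrix.of fun p b => M p (i, b)

/-- The `ij`-th `d × d` block of an `nd × nd` matrix. -/
def dblk (M : Matrix (Fin n × Fin d) (Fin n × Fin d) ℝ) (i j : Fin n) :
    Matrix (Fin d) (Fin d) ℝ :=
  Matrix.of fun a b => M (i, a) (j, b)

/-- `G' ∈ T_α(G)` (where `Ct = C + α I`): `G' ∈ O(d)^{⊗n}` and each block `G'_i` is a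
nearest point of `C̃ᵢᵀ G` in `O(d)` w.r.t. the Frobenius norm. -/
def InT (Ct : Matrix (Fin n × Fin d) (Fin n × Fin d) ℝ)
    (G G' : Matrix (Fin n × Fin d) (Fin d) ℝ) : Prop :=
  OdN G' ∧ ∀ i : Fin n, ∀ X : Matrix (Fin d) (Fin d) ℝ, IsOd X →
    frob (blk G' i - (bcol Ct i)ᵀ * G) ≤ frob (X - (bcol Ct i)ᵀ * G)

/-- `G' ∈ ST_α(G)`: the `SO(d)` analogue of `InT`. -/
def InST (Ct : Matrix (Fin n × Fin d) (Fin n × Fin d) ℝ)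
    (G G' : Matrix (Fin n × Fin d) (Fin d) ℝ) : Prop :=
  SOdN G' ∧ ∀ i : Fin n, ∀ X : Matrix (Fin d) (Fin d) ℝ, IsSOd X →
    frob (blk G' i - (bcol Ct i)ᵀ * G) ≤ frob (X - (bcol Ct i)ᵀ * G)

/-- The quotient distance `d(X, Y) = min_{g ∈ O(d)} ‖X − Y g‖_F`. -/
def dOrth (X Y : Matrix (Fin n × Fin d) (Fin d) ℝ) : ℝ :=
  ⨅ g : {g : Matrix (Fin d) (Fin d) ℝ // IsOd g}, frob (X - Y * g.1)

/-- The objective function `f(G) = tr(Gᵀ C G)`. -/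
def obj (C : Matrix (Fin n × Fin d) (Fin n × Fin d) ℝ)
    (G : Matrix (Fin n × Fin d) (Fin d) ℝ) : ℝ :=
  Matrix.trace (Gᵀ * C * G)

/-- Hadamard (entrywise) product. -/
def had {m k : Type*} (X Y : Matrix m k ℝ) : Matrix m k ℝ :=
  Matrix.of fun p q => X p q * Y p q

/-- `W ⊗ (1_d 1_dᵀ)`, the Kronecker product of `W` with the all-ones `d × d` matrix. -/
def kron1 (W : Matrix (Fin n) (Fin n) ℝ) : Matrix (Fin n × Fin d) (Fin n × Fin d) ℝ :=
  Matrix.kroneckerMap (· * ·) W (Matrix.of fun (_ _ : Fin d) => (1 : ℝ))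

/-- The all-ones matrix `1_m 1_mᵀ`. -/
def onesMat (m : Type*) : Matrix m m ℝ :=
  Matrix.of fun _ _ => (1 : ℝ)

/-- `symblockdiag`: symmetrize the diagonal `d × d` blocks, zero out all other blocks. -/
def sbd (X : Matrix (Fin n × Fin d) (Fin n × Fin d) ℝ) :
    Matrix (Fin n × Fin d) (Fin n × Fin d) ℝ :=
  Matrix.of fun p q => if p.1 = q.1 then (X p q + X (p.1, q.2) (q.1, p.2)) / 2 else 0

/-- `S(G) = symblockdiag(C G Gᵀ) − C`. -/
def Smat (C : Matrix (Fin n × Fin d) (Fin n × Fin d) ℝ)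
    (G : Matrix (Fin n × Fin d) (Fin d) ℝ) : Matrix (Fin n × Fin d) (Fin n × Fin d) ℝ :=
  sbd (C * (G * Gᵀ)) - C

/-- `G` is a second-order critical point of (QP): `S(G) G = 0` and
`⟨H, S(G) H⟩ ≥ 0` for all tangent directions `H` (blockwise `Hᵢ Gᵢᵀ` skew-symmetric). -/
def IsSOC (C : Matrix (Fin n × Fin d) (Fin n × Fin d) ℝ)
    (G : Matrix (Fin n × Fin d) (Fin d) ℝ) : Prop :=
  Smat C G * G = 0 ∧
  ∀ H : Matrix (Fin n × Fin d) (Fin d) ℝ,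
    (∀ i : Fin n, (blk H i * (blk G i)ᵀ)ᵀ = -(blk H i * (blk G i)ᵀ)) →
    0 ≤ Matrix.trace (Hᵀ * (Smat C G * H))

/-- Smallest singular value of a square matrix, as the minimum of `‖M v‖` over
unit vectors `v`. -/
def sigmaMin (M : Matrix (Fin d) (Fin d) ℝ) : ℝ :=
  ⨅ v : {v : Fin d → ℝ // ∑ a, (v a) ^ 2 = 1}, Real.sqrt (∑ a, (M.mulVec v.1 a) ^ 2)

/-- The singular values of a square matrix: square roots of the eigenvalues of `Mᵀ M`. -/
def singVal (M : Matrix (Fin d) (Fin d) ℝ) (l : Fin d) : ℝ :=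
  Real.sqrt ((Matrix.isHermitian_iff_isSymm.mpr (Matrix.isSymm_transpose_mul_self M)).eigenvalues l)

/-- Smallest eigenvalue of a (symmetric) matrix, as the minimum Rayleigh quotient
over unit vectors. -/
def lambdaMin {m : Type*} [Fintype m] (M : Matrix m m ℝ) : ℝ :=
  ⨅ v : {v : m → ℝ // ∑ i, (v i) ^ 2 = 1}, v.1 ⬝ᵥ M.mulVec v.1

/-- `D_α(G)`: block diagonal of the psd square roots of `(C̃ᵢᵀ G)(C̃ᵢᵀ G)ᵀ`, minus `C̃`. -/
def Dmat (Ct : Matrix (Fin n × Fin d) (Fin n × Fin d) ℝ)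
    (G : Matrix (Fin n × Fin d) (Fin d) ℝ) : Matrix (Fin n × Fin d) (Fin n × Fin d) ℝ :=
  (Matrix.of fun p q =>
    if p.1 = q.1 then psdSqrtMulT ((bcol Ct p.1)ᵀ * G) p.2 q.2 else 0) - Ct

/-- The residual function `ρ_α(G) = ‖D_α(G) G‖_F`. -/
def rho (Ct : Matrix (Fin n × Fin d) (Fin n × Fin d) ℝ)
    (G : Matrix (Fin n × Fin d) (Fin d) ℝ) : ℝ :=
  frob (Dmat Ct G * G)

/-- Blockwise infinity norm: `‖X‖_∞ = max_i ‖X_i‖` (spectral norm of the blocks). -/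
def binf (X : Matrix (Fin n × Fin d) (Fin d) ℝ) : ℝ :=
  ⨆ i : Fin n, spec (blk X i)

/-!
Write `C = μ G* G*ᵀ + E` with `E = ((W - μ 11ᵀ) ⊗ 11ᵀ) ∘ G* G*ᵀ + A ∘ Δ`. The first summand of `E`
acts as `W - μ 11ᵀ` after an orthogonal change of basis in each block, so `‖E Y‖_F ≤ ε ‖Y‖_F`
with `ε = ‖W - μ 11ᵀ‖ + ‖A ∘ Δ‖`.

Let `g ∈ O(d)` maximise `tr (gᵀ M)` for `M = G*ᵀ Φ`. At a maximiser `gᵀ M` is symmetric (test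
against Givens rotations) and positive semidefinite (test against Householder reflections);
since `‖M‖ ≤ n` this gives `‖M‖_F² ≤ n tr (gᵀ M)`, i.e. `n ‖Φ - G* g‖_F² ≤ 2 (n² d - ‖M‖_F²)`.
The competitor `Ψ = G* g` satisfies `Ψᵀ Ψ = n I`, so optimality of `Φ` gives
`μ (n² d - ‖M‖_F²) ≤ tr (Φᵀ E Φ) - tr (Ψᵀ E Ψ) ≤ 2 ε √(nd) ‖Φ - Ψ‖_F`. Together,
`√n μ ‖Φ - Ψ‖_F ≤ 4 ε √d`, and rounding `Φ` blockwise to `O(d)` at most doubles its distance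
to `Ψ ∈ O(d)^{⊗n}`.
-/

open WithLp

section Norms

variable {m k l : Type*} [Fintype m] [Fintype k] [Fintype l]

lemma frob_nonneg (X : Matrix m k ℝ) : 0 ≤ frob X := Real.sqrt_nonneg _

lemma frob_sq (X : Matrix m k ℝ) : frob X ^ 2 = ∑ i, ∑ j, X i j ^ 2 :=
  Real.sq_sqrt (by positivity)

lemma frob_sq_eq_trace (X : Matrix m k ℝ) : frob X ^ 2 = trace (Xᵀ * X) := by
  rw [frob_sq]
  simp only [Matrix.trace, diag_apply, mul_apply, transpose_apply, sq]
  exact Finset.sum_comm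

lemma frob_eq_norm_toLp_uncurry (X : Matrix m k ℝ) :
    frob X = ‖toLp 2 (Function.uncurry X)‖ := by
  simp [frob, EuclideanSpace.norm_eq, Fintype.sum_prod_type, Function.uncurry]

lemma frob_add_le (X Y : Matrix m k ℝ) : frob (X + Y) ≤ frob X + frob Y := by
  simp only [frob_eq_norm_toLp_uncurry]
  exact norm_add_le (toLp 2 (Function.uncurry X)) (toLp 2 (Function.uncurry Y))

lemma frob_sub_comm (X Y : Matrix m k ℝ) : frob (X - Y) = frob (Y - X) := by
  simp only [frob_eq_norm_toLp_uncurry]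
  exact norm_sub_rev (toLp 2 (Function.uncurry X)) (toLp 2 (Function.uncurry Y))

lemma trace_transpose_mul_le (X Y : Matrix m k ℝ) : trace (Xᵀ * Y) ≤ frob X * frob Y := by
  have h := real_inner_le_norm (toLp 2 (Function.uncurry X)) (toLp 2 (Function.uncurry Y))
  rw [EuclideanSpace.inner_toLp_toLp] at h
  rw [frob_eq_norm_toLp_uncurry, frob_eq_norm_toLp_uncurry]
  convert h using 1
  simp only [Matrix.trace, diag_apply, mul_apply, transpose_apply, dotProduct,
    Fintype.sum_prod_type, star_trivial, mul_comm]
  exact Finset.sum_comm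

lemma frob_sub_sq (X Y : Matrix m k ℝ) :
    frob (X - Y) ^ 2 = frob X ^ 2 + frob Y ^ 2 - 2 * trace (Yᵀ * X) := by
  have hswap : trace (Xᵀ * Y) = trace (Yᵀ * X) := by
    rw [← trace_transpose, transpose_mul, transpose_transpose]
  simp only [frob_sq_eq_trace, transpose_sub, Matrix.sub_mul, Matrix.mul_sub, trace_sub, hswap]
  ring

lemma frob_orth_mul [DecidableEq m] {g : Matrix m m ℝ} (hg : gᵀ * g = 1) (X : Matrix m k ℝ) :
    frob (g * X) = frob X := by
  have h : frob (g * X) ^ 2 = frob X ^ 2 := by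
    rw [frob_sq_eq_trace, frob_sq_eq_trace, transpose_mul, Matrix.mul_assoc,
      ← Matrix.mul_assoc gᵀ, hg, Matrix.one_mul]
  exact (sq_eq_sq₀ (frob_nonneg _) (frob_nonneg _)).mp h

lemma frob_sq_of_transpose_mul_self_eq_smul [DecidableEq k] {X : Matrix m k ℝ} {c : ℝ}
    (h : Xᵀ * X = c • 1) : frob X ^ 2 = c * Fintype.card k := by
  rw [frob_sq_eq_trace, h, trace_smul, trace_one, smul_eq_mul]

lemma frob_eq_zero_of_isEmpty [IsEmpty m] (X : Matrix m k ℝ) : frob X = 0 := by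
  simp [frob]

lemma trace_quadratic_smul_gram_add (G : Matrix m l ℝ) (E : Matrix m m ℝ) (μ : ℝ)
    (X : Matrix m k ℝ) :
    trace (Xᵀ * (μ • (G * Gᵀ) + E) * X) = μ * frob (Gᵀ * X) ^ 2 + trace (Xᵀ * E * X) := by
  simp only [frob_sq_eq_trace, Matrix.mul_add, Matrix.add_mul, trace_add, Matrix.mul_smul,
    Matrix.smul_mul, trace_smul, transpose_mul, transpose_transpose, Matrix.mul_assoc, smul_eq_mul]

section Spec

open scoped Matrix.Norms.L2Operator

lemma spec_nonneg [DecidableEq k] (M : Matrix m k ℝ) : 0 ≤ spec M := norm_nonneg _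

lemma spec_mul_le [DecidableEq k] [DecidableEq l] (A : Matrix m k ℝ) (B : Matrix k l ℝ) :
    spec (A * B) ≤ spec A * spec B :=
  Matrix.l2_opNorm_mul A B

lemma spec_transpose [DecidableEq k] [DecidableEq m] (A : Matrix m k ℝ) : spec Aᵀ = spec A := by
  rw [← conjTranspose_eq_transpose_of_trivial]
  exact Matrix.l2_opNorm_conjTranspose A

lemma spec_one_le [DecidableEq k] : spec (1 : Matrix k k ℝ) ≤ 1 := by
  -- `norm_one` would need `k` to be nonempty
  have h : spec (1 : Matrix k k ℝ) = spec (1 : Matrix k k ℝ) * spec (1 : Matrix k k ℝ) := by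
    have := Matrix.l2_opNorm_conjTranspose_mul_self (1 : Matrix k k ℝ)
    rwa [conjTranspose_one, Matrix.one_mul] at this
  nlinarith [spec_nonneg (1 : Matrix k k ℝ)]

lemma spec_le_sqrt_of_transpose_mul_self_eq_smul [DecidableEq k] {X : Matrix m k ℝ} {c : ℝ}
    (hc : 0 ≤ c) (hX : Xᵀ * X = c • 1) : spec X ≤ √c := by
  have h : spec X * spec X ≤ c := by
    calc spec X * spec X = spec (c • (1 : Matrix k k ℝ)) := by
          rw [← hX, ← conjTranspose_eq_transpose_of_trivial]
          exact (Matrix.l2_opNorm_conjTranspose_mul_self X).symm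
      _ ≤ ‖c‖ * spec (1 : Matrix k k ℝ) := norm_smul_le c (1 : Matrix k k ℝ)
      _ ≤ c := by simpa [Real.norm_of_nonneg hc] using mul_le_of_le_one_right hc spec_one_le
  exact Real.le_sqrt_of_sq_le (by nlinarith)

end Spec

lemma sum_sq_mulVec_le [DecidableEq k] (M : Matrix m k ℝ) (v : k → ℝ) :
    ∑ i, (M *ᵥ v) i ^ 2 ≤ spec M ^ 2 * ∑ j, v j ^ 2 := by
  have h := (LinearMap.toContinuousLinearMap (toEuclideanLin M)).le_opNorm (toLp 2 v)
  have h2 := pow_le_pow_left₀ (norm_nonneg _) h 2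
  rwa [mul_pow, EuclideanSpace.real_norm_sq_eq, EuclideanSpace.real_norm_sq_eq] at h2

lemma dotProduct_mulVec_le [DecidableEq m] (M : Matrix m m ℝ) (x : m → ℝ) :
    x ⬝ᵥ M *ᵥ x ≤ spec M * (x ⬝ᵥ x) := by
  have hcs := real_inner_le_norm (toLp 2 x) (toLp 2 (M *ᵥ x))
  have hop := (LinearMap.toContinuousLinearMap (toEuclideanLin M)).le_opNorm (toLp 2 x)
  have hsq := real_inner_self_eq_norm_sq (toLp 2 x)
  rw [EuclideanSpace.inner_toLp_toLp, star_trivial, dotProduct_comm] at hcs hsq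
  calc x ⬝ᵥ M *ᵥ x ≤ ‖toLp 2 x‖ * ‖toLp 2 (M *ᵥ x)‖ := hcs
    _ ≤ ‖toLp 2 x‖ * (spec M * ‖toLp 2 x‖) := mul_le_mul_of_nonneg_left hop (norm_nonneg _)
    _ = spec M * (x ⬝ᵥ x) := by rw [hsq]; ring

lemma frob_mul_le [DecidableEq m] (M : Matrix l m ℝ) (X : Matrix m k ℝ) :
    frob (M * X) ≤ spec M * frob X := by
  have h : frob (M * X) ^ 2 ≤ (spec M * frob X) ^ 2 := by
    rw [mul_pow, frob_sq, frob_sq, Finset.sum_comm, Finset.sum_comm (γ := m), Finset.mul_sum]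
    exact Finset.sum_le_sum fun q _ => sum_sq_mulVec_le M fun p => X p q
  exact le_of_sq_le_sq h (mul_nonneg (spec_nonneg M) (frob_nonneg X))

lemma sum_frob_sq_sum_smul_le {ι : Type*} [Fintype ι] [DecidableEq ι] (W : Matrix ι ι ℝ)
    (Z : ι → Matrix m k ℝ) :
    ∑ i, frob (∑ j, W i j • Z j) ^ 2 ≤ spec W ^ 2 * ∑ j, frob (Z j) ^ 2 := by
  simp only [frob_sq, Matrix.sum_apply, Matrix.smul_apply, smul_eq_mul]
  rw [Finset.sum_comm, Finset.sum_comm (γ := ι), Finset.mul_sum]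
  refine Finset.sum_le_sum fun a _ => ?_
  rw [Finset.sum_comm, Finset.sum_comm (γ := ι), Finset.mul_sum]
  exact Finset.sum_le_sum fun b _ => sum_sq_mulVec_le W fun j => Z j a b

lemma trace_quadratic_sub_le {E : Matrix m m ℝ} {ε : ℝ}
    (hE : ∀ Y : Matrix m k ℝ, frob (E * Y) ≤ ε * frob Y) (X Y : Matrix m k ℝ) :
    trace (Xᵀ * E * X) - trace (Yᵀ * E * Y) ≤ ε * frob (X - Y) * (frob X + frob Y) := by
  have h : trace (Xᵀ * E * X) - trace (Yᵀ * E * Y) =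
      trace ((X - Y)ᵀ * (E * X)) + trace (Yᵀ * (E * (X - Y))) := by
    simp only [transpose_sub, Matrix.sub_mul, Matrix.mul_sub, trace_sub, Matrix.mul_assoc]
    ring
  calc trace (Xᵀ * E * X) - trace (Yᵀ * E * Y)
      ≤ frob (X - Y) * (ε * frob X) + frob Y * (ε * frob (X - Y)) := by
        rw [h]
        exact add_le_add
          ((trace_transpose_mul_le _ _).trans (mul_le_mul_of_nonneg_left (hE X) (frob_nonneg _)))
          ((trace_transpose_mul_le _ _).trans (mul_le_mul_of_nonneg_left (hE _) (frob_nonneg _)))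
    _ = ε * frob (X - Y) * (frob X + frob Y) := by ring

open scoped MatrixOrder in
lemma trace_mul_self_le_of_posSemidef [DecidableEq m] {R : Matrix m m ℝ} {ν : ℝ}
    (hR : R.PosSemidef) (hνR : (ν • 1 - R).PosSemidef) : trace (R * R) ≤ ν * trace R := by
  -- `tr (R (ν - R)) = tr (S (ν - R) S)` for `S = √R`
  set S := CFC.sqrt R
  have hSS : S * S = R := CFC.sqrt_mul_sqrt_self R hR.nonneg
  have hS : Sᴴ = S := (CFC.sqrt_nonneg R).posSemidef.1
  have h := (hνR.mul_mul_conjTranspose_same S).trace_nonneg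
  rw [hS, trace_mul_cycle, hSS, Matrix.mul_sub, trace_sub, mul_smul_comm, Matrix.mul_one,
    trace_smul, smul_eq_mul] at h
  linarith

end Norms

section Blocks

lemma blk_sub (X Y : Matrix (Fin n × Fin d) (Fin d) ℝ) (i : Fin n) :
    blk (X - Y) i = blk X i - blk Y i := rfl

lemma frob_sq_eq_sum_blk (X : Matrix (Fin n × Fin d) (Fin d) ℝ) :
    frob X ^ 2 = ∑ i, frob (blk X i) ^ 2 := by
  simp only [frob_sq, Fintype.sum_prod_type]
  rfl

lemma frob_sub_le_of_forall_frob_blk_sub_le {X Y Z : Matrix (Fin n × Fin d) (Fin d) ℝ}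
    (h : ∀ i, frob (blk X i - blk Z i) ≤ frob (blk Y i - blk Z i)) :
    frob (X - Z) ≤ frob (Y - Z) := by
  refine le_of_sq_le_sq ?_ (frob_nonneg _)
  rw [frob_sq_eq_sum_blk, frob_sq_eq_sum_blk]
  simp only [blk_sub]
  exact Finset.sum_le_sum fun i _ => pow_le_pow_left₀ (frob_nonneg _) (h i) 2

lemma OdN.transpose_mul_self {G : Matrix (Fin n × Fin d) (Fin d) ℝ} (hG : OdN G) :
    Gᵀ * G = (n : ℝ) • (1 : Matrix (Fin d) (Fin d) ℝ) := by
  have h : Gᵀ * G = ∑ i, (blk G i)ᵀ * blk G i := by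
    ext a b
    simp only [mul_apply, transpose_apply, Fintype.sum_prod_type, Matrix.sum_apply, blk, of_apply]
  rw [h, Finset.sum_congr rfl fun i _ => (hG i).1, Finset.sum_const, Finset.card_univ,
    Fintype.card_fin, Nat.cast_smul_eq_nsmul]

lemma blk_had_kron1_gram_mul (W : Matrix (Fin n) (Fin n) ℝ)
    (G Y : Matrix (Fin n × Fin d) (Fin d) ℝ) (i : Fin n) :
    blk (had (kron1 W) (G * Gᵀ) * Y) i = blk G i * ∑ j, W i j • ((blk G j)ᵀ * blk Y j) := by
  ext a q
  simp only [blk, had, kron1, of_apply, mul_apply, kroneckerMap_apply, transpose_apply,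
    Fintype.sum_prod_type, Matrix.sum_apply, Matrix.smul_apply, smul_eq_mul, mul_one,
    Finset.mul_sum, Finset.sum_mul]
  rw [Finset.sum_comm (γ := Fin d)]
  refine Finset.sum_congr rfl fun j _ => ?_
  rw [Finset.sum_comm]
  exact Finset.sum_congr rfl fun b _ => Finset.sum_congr rfl fun c _ => by ring

lemma frob_had_kron1_gram_mul_le {G : Matrix (Fin n × Fin d) (Fin d) ℝ} (hG : OdN G)
    (W : Matrix (Fin n) (Fin n) ℝ) (Y : Matrix (Fin n × Fin d) (Fin d) ℝ) :
    frob (had (kron1 W) (G * Gᵀ) * Y) ≤ spec W * frob Y := by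
  have hGt : ∀ j, ((blk G j)ᵀ)ᵀ * (blk G j)ᵀ = 1 := fun j => (hG j).2
  have h : frob (had (kron1 W) (G * Gᵀ) * Y) ^ 2 ≤ (spec W * frob Y) ^ 2 := by
    rw [frob_sq_eq_sum_blk, mul_pow, frob_sq_eq_sum_blk]
    simp only [blk_had_kron1_gram_mul, frob_orth_mul (hG _).1]
    calc ∑ i, frob (∑ j, W i j • ((blk G j)ᵀ * blk Y j)) ^ 2
        ≤ spec W ^ 2 * ∑ j, frob ((blk G j)ᵀ * blk Y j) ^ 2 := sum_frob_sq_sum_smul_le W _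
      _ = spec W ^ 2 * ∑ j, frob (blk Y j) ^ 2 := by simp only [frob_orth_mul (hGt _)]
  exact le_of_sq_le_sq h (mul_nonneg (spec_nonneg W) (frob_nonneg Y))

lemma had_kron1_gram_add_eq (W : Matrix (Fin n) (Fin n) ℝ) (μ : ℝ)
    (G : Matrix (Fin n × Fin d) (Fin d) ℝ) (Δ : Matrix (Fin n × Fin d) (Fin n × Fin d) ℝ) :
    had (kron1 W) (G * Gᵀ + Δ) =
      μ • (G * Gᵀ) + (had (kron1 (W - μ • onesMat (Fin n))) (G * Gᵀ) + had (kron1 W) Δ) := by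
  ext p q
  simp only [had, kron1, onesMat, of_apply, kroneckerMap_apply, Matrix.add_apply,
    Matrix.smul_apply, Matrix.sub_apply, smul_eq_mul]
  ring

end Blocks

section OrthogonalGroup

lemma IsOd.of_transpose_mul_self {g : Matrix (Fin d) (Fin d) ℝ} (h : gᵀ * g = 1) : IsOd g :=
  ⟨h, mul_eq_one_comm.mp h⟩

lemma IsOd.one : IsOd (1 : Matrix (Fin d) (Fin d) ℝ) := by
  constructor <;> simp

lemma IsOd.mul {g h : Matrix (Fin d) (Fin d) ℝ} (hg : IsOd g) (hh : IsOd h) : IsOd (g * h) := by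
  refine .of_transpose_mul_self ?_
  rw [transpose_mul, Matrix.mul_assoc, ← Matrix.mul_assoc gᵀ, hg.1, Matrix.one_mul, hh.1]

lemma IsOd.transpose {g : Matrix (Fin d) (Fin d) ℝ} (hg : IsOd g) : IsOd gᵀ :=
  ⟨by rw [transpose_transpose, hg.2], by rw [transpose_transpose, hg.1]⟩

lemma IsOd.sq_apply_le_one {g : Matrix (Fin d) (Fin d) ℝ} (hg : IsOd g) (a b : Fin d) :
    g a b ^ 2 ≤ 1 := by
  have h : ∑ c, g c b ^ 2 = 1 := by
    simpa [mul_apply, sq] using congrFun (congrFun hg.1 b) b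
  exact h ▸ Finset.single_le_sum (fun c _ => sq_nonneg (g c b)) (Finset.mem_univ a)

lemma isCompact_setOf_isOd : IsCompact {g : Matrix (Fin d) (Fin d) ℝ | IsOd g} := by
  refine (isCompact_univ_pi fun _ => isCompact_univ_pi fun _ =>
    isCompact_Icc (a := (-1 : ℝ)) (b := 1)).of_isClosed_subset ?_ ?_
  · exact (isClosed_eq (by fun_prop) continuous_const).inter
      (isClosed_eq (by fun_prop) continuous_const)
  · intro g hg
    simp only [Set.mem_pi, Set.mem_univ, forall_const]
    exact fun a b =>
      abs_le.mp (abs_le_of_sq_le_sq (by simpa using hg.sq_apply_le_one a b) zero_le_one)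

lemma exists_isOd_forall_trace_transpose_mul_le (B : Matrix (Fin d) (Fin d) ℝ) :
    ∃ g₀, IsOd g₀ ∧ ∀ g, IsOd g → trace (gᵀ * B) ≤ trace (g₀ᵀ * B) := by
  obtain ⟨g₀, hg₀, hmax⟩ := isCompact_setOf_isOd.exists_isMaxOn ⟨1, IsOd.one⟩
    (Continuous.continuousOn (by fun_prop) : ContinuousOn (fun g => trace (gᵀ * B)) _)
  exact ⟨g₀, hg₀, fun g hg => hmax hg⟩

def givens (a b : Fin d) (x y : ℝ) : Matrix (Fin d) (Fin d) ℝ :=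
  1 + (x - 1) • (single a a 1 + single b b 1) + y • (single a b 1 - single b a 1)

lemma isOd_givens {a b : Fin d} (hab : a ≠ b) {x y : ℝ} (h : x ^ 2 + y ^ 2 = 1) :
    IsOd (givens a b x y) := by
  have hs : ∀ i j l : Fin d, single i j (1 : ℝ) * single j l 1 = single i l 1 := fun i j l => by
    simp [single_mul_single_same]
  have hz : ∀ i j j' l : Fin d, j ≠ j' → single i j (1 : ℝ) * single j' l 1 = 0 :=
    fun i j j' l h => by simp [h]
  set P := single a a (1 : ℝ) + single b b 1
  set J := single a b (1 : ℝ) - single b a 1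
  have hPP : P * P = P := by
    simp only [P, Matrix.add_mul, Matrix.mul_add, hs, hz a a b b hab, hz b b a a hab.symm]; abel
  have hJJ : J * J = -P := by
    simp only [P, J, Matrix.sub_mul, Matrix.mul_sub, hs, hz a b a b hab.symm, hz b a b a hab]; abel
  have hPJ : P * J = J := by
    simp only [P, J, Matrix.add_mul, Matrix.mul_sub, hs, hz a a b a hab, hz b b a b hab.symm]; abel
  have hJP : J * P = J := by
    simp only [P, J, Matrix.sub_mul, Matrix.mul_add, hs, hz a b a a hab.symm, hz b a b b hab]; abel
  have hG : givens a b x y = 1 + (x - 1) • P + y • J := rfl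
  have hT : (givens a b x y)ᵀ = 1 + (x - 1) • P - y • J := by
    simp only [givens, transpose_add, transpose_smul, transpose_one, transpose_sub,
      transpose_single, P, J]
    module
  refine .of_transpose_mul_self ?_
  calc (givens a b x y)ᵀ * givens a b x y = 1 + (x ^ 2 + y ^ 2 - 1) • P := by
        rw [hT, hG]
        simp only [Matrix.add_mul, Matrix.mul_add, Matrix.sub_mul, smul_mul_assoc,
          mul_smul_comm, Matrix.one_mul, Matrix.mul_one, hPP, hJJ, hPJ, hJP, smul_neg]
        module
    _ = 1 := by rw [h]; simp

lemma trace_givens_mul (a b : Fin d) (x y : ℝ) (R : Matrix (Fin d) (Fin d) ℝ) :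
    trace (givens a b x y * R) = trace R + (x - 1) * (R a a + R b b) + y * (R b a - R a b) := by
  simp [givens, Matrix.add_mul, Matrix.sub_mul, trace_single_mul]
  ring

def householder (v : Fin d → ℝ) : Matrix (Fin d) (Fin d) ℝ :=
  1 - (2 / (v ⬝ᵥ v)) • vecMulVec v v

lemma isOd_householder {v : Fin d → ℝ} (hv : v ⬝ᵥ v ≠ 0) : IsOd (householder v) := by
  refine .of_transpose_mul_self ?_
  have hT : (householder v)ᵀ = householder v := by
    simp [householder, transpose_vecMulVec]
  rw [hT, householder]
  simp only [Matrix.sub_mul, Matrix.mul_sub, Matrix.one_mul, Matrix.mul_one, smul_mul_assoc,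
    mul_smul_comm, vecMulVec_mul_vecMulVec, vecMulVec_smul, smul_smul]
  field_simp
  module

lemma trace_householder_mul (v : Fin d → ℝ) (R : Matrix (Fin d) (Fin d) ℝ) :
    trace (householder v * R) = trace R - 2 / (v ⬝ᵥ v) * (v ⬝ᵥ R *ᵥ v) := by
  simp [householder, Matrix.sub_mul, vecMulVec_mul, trace_vecMulVec, dotProduct_mulVec,
    dotProduct_comm]

end OrthogonalGroup

section Polar

variable {R : Matrix (Fin d) (Fin d) ℝ}

lemma transpose_eq_of_forall_trace_mul_le (hR : ∀ q, IsOd q → trace (q * R) ≤ trace R) :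
    Rᵀ = R := by
  ext a b
  rcases eq_or_ne a b with rfl | hab
  · rfl
  set c := R a a + R b b
  set s := R b a - R a b
  suffices hs : s = 0 by simp only [transpose_apply]; linarith
  by_contra hs
  have hpos : 0 < c ^ 2 + s ^ 2 := by positivity
  set r := √(c ^ 2 + s ^ 2)
  have hr : 0 < r := Real.sqrt_pos.mpr hpos
  have hr2 : r ^ 2 = c ^ 2 + s ^ 2 := Real.sq_sqrt hpos.le
  have hxy : (c / r) ^ 2 + (s / r) ^ 2 = 1 := by field_simp; linarith
  -- the rotation taking `(c, s)` to `(r, 0)` would increase the trace by `r - c`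
  have h := hR _ (isOd_givens hab hxy)
  rw [trace_givens_mul] at h
  have hrc : r ≤ c := by
    have : (c / r - 1) * c + s / r * s = r - c := by field_simp; linarith
    linarith
  nlinarith [sq_pos_of_ne_zero hs]

lemma dotProduct_mulVec_nonneg_of_forall_trace_mul_le
    (hR : ∀ q, IsOd q → trace (q * R) ≤ trace R) (x : Fin d → ℝ) : 0 ≤ x ⬝ᵥ R *ᵥ x := by
  rcases eq_or_ne (x ⬝ᵥ x) 0 with hx | hx
  · simp [dotProduct_self_eq_zero.mp hx]
  have h := hR _ (isOd_householder hx)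
  rw [trace_householder_mul] at h
  have : 0 < 2 / (x ⬝ᵥ x) :=
    div_pos two_pos ((Finset.sum_nonneg fun i _ => mul_self_nonneg (x i)).lt_of_ne' hx)
  nlinarith

lemma exists_isOd_frob_sq_le (B : Matrix (Fin d) (Fin d) ℝ) {ν : ℝ} (hB : spec B ≤ ν) :
    ∃ g, IsOd g ∧ frob B ^ 2 ≤ ν * trace (gᵀ * B) := by
  obtain ⟨g₀, hg₀, hmax⟩ := exists_isOd_forall_trace_transpose_mul_le B
  set R := g₀ᵀ * B
  have hR : ∀ q, IsOd q → trace (q * R) ≤ trace R := fun q hq => by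
    simpa [R, transpose_mul, Matrix.mul_assoc] using hmax _ (hg₀.mul hq.transpose)
  have hsym : Rᵀ = R := transpose_eq_of_forall_trace_mul_le hR
  have hRpsd : R.PosSemidef :=
    .of_dotProduct_mulVec_nonneg (by rwa [IsHermitian, conjTranspose_eq_transpose_of_trivial])
      fun x => by simpa using dotProduct_mulVec_nonneg_of_forall_trace_mul_le hR x
  have hspecR : spec R ≤ ν := by
    calc spec R ≤ spec g₀ᵀ * spec B := spec_mul_le _ _
      _ ≤ 1 * ν := by
        refine mul_le_mul ?_ hB (spec_nonneg B) zero_le_one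
        simpa using spec_le_sqrt_of_transpose_mul_self_eq_smul zero_le_one
          (by simpa using hg₀.transpose.1)
      _ = ν := one_mul ν
  have hνR : (ν • 1 - R).PosSemidef := by
    refine .of_dotProduct_mulVec_nonneg ?_ fun x => ?_
    · rw [IsHermitian, conjTranspose_eq_transpose_of_trivial, transpose_sub, transpose_smul,
        transpose_one, hsym]
    · have h := dotProduct_mulVec_le R x
      have hx : 0 ≤ x ⬝ᵥ x := Finset.sum_nonneg fun i _ => mul_self_nonneg (x i)
      simp only [star_trivial, sub_mulVec, smul_mulVec, one_mulVec, dotProduct_sub,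
        dotProduct_smul, smul_eq_mul]
      nlinarith
  refine ⟨g₀, hg₀, ?_⟩
  have hRtR : Rᵀ * R = Bᵀ * B := by
    simp only [R, transpose_mul, transpose_transpose, Matrix.mul_assoc,
      ← Matrix.mul_assoc g₀ g₀ᵀ, hg₀.2, Matrix.one_mul]
  rw [frob_sq_eq_trace, ← hRtR, hsym]
  exact trace_mul_self_le_of_posSemidef hRpsd hνR

end Polar

lemma mul_le_of_mul_mul_self_le {a b u : ℝ} (hb : 0 ≤ b) (hu : 0 ≤ u) (h : a * u * u ≤ b * u) :
    a * u ≤ b := by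
  rcases hu.eq_or_lt with rfl | hu
  · simpa using hb
  · exact le_of_mul_le_mul_right h hu

section SpectralEstimator

variable {G Φ : Matrix (Fin n × Fin d) (Fin d) ℝ} {C E : Matrix (Fin n × Fin d) (Fin n × Fin d) ℝ}
  {μ ε : ℝ}

lemma spec_transpose_mul_le (hG : OdN G) (hΦ : Φᵀ * Φ = (n : ℝ) • 1) : spec (Gᵀ * Φ) ≤ n :=
  calc spec (Gᵀ * Φ) ≤ spec Gᵀ * spec Φ := spec_mul_le _ _
    _ ≤ √n * √n := by
      rw [spec_transpose]
      exact mul_le_mul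
        (spec_le_sqrt_of_transpose_mul_self_eq_smul n.cast_nonneg hG.transpose_mul_self)
        (spec_le_sqrt_of_transpose_mul_self_eq_smul n.cast_nonneg hΦ) (spec_nonneg _)
        (Real.sqrt_nonneg _)
    _ = n := Real.mul_self_sqrt n.cast_nonneg

lemma OdN.transpose_mul_mul (hG : OdN G) (g : Matrix (Fin d) (Fin d) ℝ) :
    Gᵀ * (G * g) = (n : ℝ) • g := by
  rw [← Matrix.mul_assoc, hG.transpose_mul_self, Matrix.smul_mul, Matrix.one_mul]

lemma OdN.mul_transpose_mul_self (hG : OdN G) {g : Matrix (Fin d) (Fin d) ℝ} (hg : IsOd g) :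
    (G * g)ᵀ * (G * g) = (n : ℝ) • 1 := by
  rw [transpose_mul, Matrix.mul_assoc, hG.transpose_mul_mul, Matrix.mul_smul, hg.1]

lemma frob_eq_sqrt_mul_sqrt (hΦ : Φᵀ * Φ = (n : ℝ) • 1) : frob Φ = √n * √d := by
  rw [← Real.sqrt_mul n.cast_nonneg, ← Real.sqrt_sq (frob_nonneg Φ)]
  simpa using congrArg Real.sqrt (frob_sq_of_transpose_mul_self_eq_smul hΦ)

lemma mul_sub_frob_sq_le_of_forall_trace_le (hG : OdN G) {g : Matrix (Fin d) (Fin d) ℝ}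
    (hg : IsOd g) (hΦ : Φᵀ * Φ = (n : ℝ) • 1) (hCE : C = μ • (G * Gᵀ) + E)
    (hE : ∀ Y : Matrix (Fin n × Fin d) (Fin d) ℝ, frob (E * Y) ≤ ε * frob Y)
    (hmax : ∀ Ψ : Matrix (Fin n × Fin d) (Fin d) ℝ,
      Ψᵀ * Ψ = (n : ℝ) • 1 → trace (Ψᵀ * C * Ψ) ≤ trace (Φᵀ * C * Φ)) :
    μ * (n * n * d - frob (Gᵀ * Φ) ^ 2) ≤ 2 * ε * frob (Φ - G * g) * (√n * √d) := by
  have hΨ := hG.mul_transpose_mul_self hg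
  have hfGΨ : frob (Gᵀ * (G * g)) ^ 2 = n * n * d := by
    rw [hG.transpose_mul_mul]
    simpa using frob_sq_of_transpose_mul_self_eq_smul (X := (n : ℝ) • g) (c := n * n)
      (by rw [transpose_smul, Matrix.smul_mul, Matrix.mul_smul, hg.1, smul_smul])
  have h := hmax _ hΨ
  rw [hCE, trace_quadratic_smul_gram_add, trace_quadratic_smul_gram_add, hfGΨ] at h
  have h2 := trace_quadratic_sub_le hE Φ (G * g)
  rw [frob_eq_sqrt_mul_sqrt hΦ, frob_eq_sqrt_mul_sqrt hΨ] at h2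
  linarith

lemma mul_frob_sub_sq_le (hG : OdN G) {g : Matrix (Fin d) (Fin d) ℝ} (hg : IsOd g)
    (hΦ : Φᵀ * Φ = (n : ℝ) • 1) (hpolar : frob (Gᵀ * Φ) ^ 2 ≤ n * trace (gᵀ * (Gᵀ * Φ))) :
    n * frob (Φ - G * g) ^ 2 ≤ 2 * (n * n * d - frob (Gᵀ * Φ) ^ 2) := by
  have h : frob (Φ - G * g) ^ 2 = 2 * (n * d) - 2 * trace (gᵀ * (Gᵀ * Φ)) := by
    rw [frob_sub_sq, frob_sq_of_transpose_mul_self_eq_smul hΦ,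
      frob_sq_of_transpose_mul_self_eq_smul (hG.mul_transpose_mul_self hg), transpose_mul,
      Matrix.mul_assoc, Fintype.card_fin]
    ring
  rw [h]
  linarith

lemma exists_isOd_frob_sub_le (hμ : 0 < μ) (hε : 0 ≤ ε) (hG : OdN G)
    (hΦ : Φᵀ * Φ = (n : ℝ) • 1) (hCE : C = μ • (G * Gᵀ) + E)
    (hE : ∀ Y : Matrix (Fin n × Fin d) (Fin d) ℝ, frob (E * Y) ≤ ε * frob Y)
    (hmax : ∀ Ψ : Matrix (Fin n × Fin d) (Fin d) ℝ,
      Ψᵀ * Ψ = (n : ℝ) • 1 → trace (Ψᵀ * C * Ψ) ≤ trace (Φᵀ * C * Φ)) :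
    ∃ g : Matrix (Fin d) (Fin d) ℝ, IsOd g ∧ μ * (√n * frob (Φ - G * g)) ≤ 4 * ε * √d := by
  obtain ⟨g, hg, hpolar⟩ := exists_isOd_frob_sq_le (Gᵀ * Φ) (spec_transpose_mul_le hG hΦ)
  refine ⟨g, hg, ?_⟩
  have hgap := mul_sub_frob_sq_le_of_forall_trace_le hG hg hΦ hCE hE hmax
  have hF := mul_frob_sub_sq_le hG hg hΦ hpolar
  set F := frob (Φ - G * g)
  have hn : √n * √n = n := Real.mul_self_sqrt n.cast_nonneg
  refine mul_le_of_mul_mul_self_le (by positivity)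
    (mul_nonneg (Real.sqrt_nonneg _) (frob_nonneg _)) ?_
  calc μ * (√n * F) * (√n * F) = μ * ((√n * √n) * F ^ 2) := by ring
    _ = μ * (n * F ^ 2) := by rw [hn]
    _ ≤ μ * (2 * (n * n * d - frob (Gᵀ * Φ) ^ 2)) := mul_le_mul_of_nonneg_left hF hμ.le
    _ ≤ 2 * (2 * ε * F * (√n * √d)) := by linarith
    _ = 4 * ε * √d * (√n * F) := by ring

lemma dOrth_le_frob (X Y : Matrix (Fin n × Fin d) (Fin d) ℝ) {g : Matrix (Fin d) (Fin d) ℝ}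
    (hg : IsOd g) : dOrth X Y ≤ frob (X - Y * g) :=
  ciInf_le (f := fun g : {g // IsOd g} => frob (X - Y * g.1))
    ⟨0, by rintro _ ⟨g, rfl⟩; exact frob_nonneg _⟩ ⟨g, hg⟩

lemma dOrth_le_two_mul_frob_sub {G₀ : Matrix (Fin n × Fin d) (Fin d) ℝ}
    {g : Matrix (Fin d) (Fin d) ℝ} (hG : OdN G) (hg : IsOd g)
    (hproj : ∀ i, ∀ X, IsOd X → frob (blk G₀ i - blk Φ i) ≤ frob (X - blk Φ i)) :
    dOrth G₀ G ≤ 2 * frob (Φ - G * g) := by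
  have hround : frob (G₀ - Φ) ≤ frob (Φ - G * g) := by
    rw [frob_sub_comm Φ]
    exact frob_sub_le_of_forall_frob_blk_sub_le fun i =>
      hproj i (blk (G * g) i) ((hG i).mul hg)
  calc dOrth G₀ G ≤ frob (G₀ - G * g) := dOrth_le_frob G₀ G hg
    _ ≤ frob (G₀ - Φ) + frob (Φ - G * g) := by simpa using frob_add_le (G₀ - Φ) (Φ - G * g)
    _ ≤ 2 * frob (Φ - G * g) := by linarith

end SpectralEstimator

theorem spectral_estimator_quality_general {n d : ℕ}
    (W : Matrix (Fin n) (Fin n) ℝ)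
    (μ : ℝ) (hμ : 0 < μ)
    (Gs : Matrix (Fin n × Fin d) (Fin d) ℝ) (hGs : OdN Gs)
    (Δ : Matrix (Fin n × Fin d) (Fin n × Fin d) ℝ)
    (A C : Matrix (Fin n × Fin d) (Fin n × Fin d) ℝ)
    (hA : A = kron1 W) (hC : C = had A (Gs * Gsᵀ + Δ))
    (Φ : Matrix (Fin n × Fin d) (Fin d) ℝ)
    (hΦ : Φᵀ * Φ = (n : ℝ) • (1 : Matrix (Fin d) (Fin d) ℝ))
    (hΦmax : ∀ Ψ : Matrix (Fin n × Fin d) (Fin d) ℝ,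
      Ψᵀ * Ψ = (n : ℝ) • (1 : Matrix (Fin d) (Fin d) ℝ) →
      Matrix.trace (Ψᵀ * C * Ψ) ≤ Matrix.trace (Φᵀ * C * Φ))
    (G0 : Matrix (Fin n × Fin d) (Fin d) ℝ)
    (hG0proj : ∀ i : Fin n, ∀ X : Matrix (Fin d) (Fin d) ℝ, IsOd X →
      frob (blk G0 i - blk Φ i) ≤ frob (X - blk Φ i)) :
    dOrth G0 Gs ≤
      8 * Real.sqrt d * (spec (W - μ • onesMat (Fin n)) + spec (had A Δ)) /
        (Real.sqrt n * μ) := by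
  set ε := spec (W - μ • onesMat (Fin n)) + spec (had A Δ)
  set E := had (kron1 (W - μ • onesMat (Fin n))) (Gs * Gsᵀ) + had A Δ
  have hE : ∀ Y : Matrix (Fin n × Fin d) (Fin d) ℝ, frob (E * Y) ≤ ε * frob Y := fun Y => by
    rw [Matrix.add_mul, add_mul]
    exact (frob_add_le _ _).trans
      (add_le_add (frob_had_kron1_gram_mul_le hGs _ Y) (frob_mul_le _ Y))
  obtain ⟨g, hg, hΦg⟩ := exists_isOd_frob_sub_le hμ
    (add_nonneg (spec_nonneg _) (spec_nonneg _)) hGs hΦ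
    (by rw [hC, hA, had_kron1_gram_add_eq W μ, ← hA]) hE hΦmax
  have hdist := dOrth_le_two_mul_frob_sub hGs hg hG0proj
  rcases Nat.eq_zero_or_pos n with rfl | hn
  · simpa [frob_eq_zero_of_isEmpty] using hdist
  · rw [le_div_iff₀ (by positivity)]
    linarith [mul_le_mul_of_nonneg_right hdist (by positivity : 0 ≤ √(n : ℝ) * μ)]

/-- quality of the spectral estimator.
Under the generative model, let `Φ ∈ ℝ^{nd×d}` satisfy `Φᵀ Φ = n I_d` and maximize
`tr(Φᵀ C Φ)` over all matrices with this constraint, and let `G⁰ ∈ O(d)^{⊗n}` be a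
blockwise nearest point of `Φ` in `O(d)^{⊗n}`. Then
`d(G⁰, G*) ≤ 8√d (‖W − μ·1_n1_nᵀ‖ + ‖A ∘ Δ‖)/(√n μ)`. -/
theorem spectral_estimator_quality {n d : ℕ}
    (W : Matrix (Fin n) (Fin n) ℝ) (hW : Wᵀ = W)
    (μ : ℝ) (hμ : 0 < μ) (hWdiag : ∀ i : Fin n, W i i = μ)
    (Gs : Matrix (Fin n × Fin d) (Fin d) ℝ) (hGs : OdN Gs)
    (Δ : Matrix (Fin n × Fin d) (Fin n × Fin d) ℝ) (hΔ : Δᵀ = Δ)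
    (hΔdiag : ∀ i : Fin n, dblk Δ i i = 0)
    (A C : Matrix (Fin n × Fin d) (Fin n × Fin d) ℝ)
    (hA : A = kron1 W) (hC : C = had A (Gs * Gsᵀ + Δ))
    (Φ : Matrix (Fin n × Fin d) (Fin d) ℝ)
    (hΦ : Φᵀ * Φ = (n : ℝ) • (1 : Matrix (Fin d) (Fin d) ℝ))
    (hΦmax : ∀ Ψ : Matrix (Fin n × Fin d) (Fin d) ℝ,
      Ψᵀ * Ψ = (n : ℝ) • (1 : Matrix (Fin d) (Fin d) ℝ) →
      Matrix.trace (Ψᵀ * C * Ψ) ≤ Matrix.trace (Φᵀ * C * Φ))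
    (G0 : Matrix (Fin n × Fin d) (Fin d) ℝ) (hG0 : OdN G0)
    (hG0proj : ∀ i : Fin n, ∀ X : Matrix (Fin d) (Fin d) ℝ, IsOd X →
      frob (blk G0 i - blk Φ i) ≤ frob (X - blk Φ i)) :
    dOrth G0 Gs ≤
      8 * Real.sqrt d * (spec (W - μ • onesMat (Fin n)) + spec (had A Δ)) /
        (Real.sqrt n * μ) :=
  spectral_estimator_quality_general W μ hμ Gs hGs Δ A C hA hC Φ hΦ hΦmax G0 hG0proj

end GroupSync
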